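/- Let s(x) = αx² + βx + γ with α ≠ 0, let S = {(x, s(x)) : x ∈ ℝ} ⊆ ℝ², and let (x̄, ȳ) ∈ ℝ² with ȳ ≠ s(x̄). Set p := −(β² + 4αȳ − 4αγ − 2)/(4α²), q := −(2αx̄ + β)/(4α³), and Δ := (p/3)³ + (q/2)². If p = 0 or Δ > 0, then the set of points of S nearest to (x̄, ȳ) (in the Euclidean distance of ℝ²) is the singleton {(x₁, s(x₁))}, where x₁ := −β/(2α) + ∛((2αx̄ + β)/(8α³) − √Δ) + ∛((2αx̄ + β)/(8α³) + √Δ), with ∛ denoting the real cube root. -/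
import Mathlib


/-- The real cube root. -/
noncomputable def cbrt (t : ℝ) : ℝ := Real.sign t * |t| ^ ((1 : ℝ) / 3)

lemma cbrt_cube (t : ℝ) : cbrt t ^ 3 = t := by
  unfold cbrt
  have h : (|t| ^ ((1:ℝ)/3)) ^ (3:ℕ) = |t| := by
    rw [← Real.rpow_natCast (|t| ^ ((1:ℝ)/3)) 3, ← Real.rpow_mul (abs_nonneg t)]
    norm_num
  rw [mul_pow, h]
  rcases lt_trichotomy t 0 with ht | ht | ht
  · rw [Real.sign_of_neg ht, abs_of_neg ht]; ring
  · simp [ht]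
  · rw [Real.sign_of_pos ht, abs_of_pos ht]; ring

lemma pow3_inj {a b : ℝ} (h : a ^ 3 = b ^ 3) : a = b :=
  (Odd.strictMono_pow (R := ℝ) (by decide : Odd 3)).injective h

lemma cube_cbrt (x : ℝ) : cbrt (x ^ 3) = x :=
  pow3_inj (cbrt_cube (x ^ 3))

lemma cbrt_mul (u v : ℝ) : cbrt (u * v) = cbrt u * cbrt v := by
  apply pow3_inj
  rw [mul_pow, cbrt_cube, cbrt_cube, cbrt_cube]

/-- projection onto the graph of `s(x) = αx² + βx + γ` in the case
`p = 0` or `Δ > 0`. -/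
theorem stmt_6 (α β γ xb yb p q Δ x₁ : ℝ) (hα : α ≠ 0)
    (hy : yb ≠ α * xb ^ 2 + β * xb + γ)
    (hp : p = -(β ^ 2 + 4 * α * yb - 4 * α * γ - 2) / (4 * α ^ 2))
    (hq : q = -(2 * α * xb + β) / (4 * α ^ 3))
    (hΔ : Δ = (p / 3) ^ 3 + (q / 2) ^ 2)
    (hx₁ : x₁ = -β / (2 * α) + cbrt ((2 * α * xb + β) / (8 * α ^ 3) - Real.sqrt Δ)
        + cbrt ((2 * α * xb + β) / (8 * α ^ 3) + Real.sqrt Δ))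
    (hcase : p = 0 ∨ 0 < Δ) :
    {z : ℝ × ℝ | (∃ x : ℝ, z = (x, α * x ^ 2 + β * x + γ)) ∧
        ∀ w : ℝ, Real.sqrt ((xb - z.1) ^ 2 + (yb - z.2) ^ 2) ≤
          Real.sqrt ((xb - w) ^ 2 + (yb - (α * w ^ 2 + β * w + γ)) ^ 2)} =
      {(x₁, α * x₁ ^ 2 + β * x₁ + γ)} := by
  set A := cbrt ((2 * α * xb + β) / (8 * α ^ 3) - Real.sqrt Δ) with hA
  set B := cbrt ((2 * α * xb + β) / (8 * α ^ 3) + Real.sqrt Δ) with hB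
  have hΔ0 : 0 ≤ Δ := by
    rcases hcase with h | h
    · rw [hΔ, h]; positivity
    · linarith
  have hΔcase : Δ = 0 → p = 0 := by
    intro h
    rcases hcase with h' | h'
    · exact h'
    · linarith
  have hsq : Real.sqrt Δ * Real.sqrt Δ = Δ := Real.mul_self_sqrt hΔ0
  have hsqΔ : Real.sqrt Δ = 0 → Δ = 0 := by
    intro h; rw [← hsq, h, mul_zero]
  have harg : (2 * α * xb + β) / (8 * α ^ 3) = -q / 2 := by rw [hq]; ring
  have hA3 : A ^ 3 = -q / 2 - Real.sqrt Δ := by rw [hA, harg, cbrt_cube]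
  have hB3 : B ^ 3 = -q / 2 + Real.sqrt Δ := by rw [hB, harg, cbrt_cube]
  have hAB : A * B = -(p / 3) := by
    have h1 : A * B = cbrt ((-q/2 - Real.sqrt Δ) * (-q/2 + Real.sqrt Δ)) := by
      rw [hA, hB, harg]; exact (cbrt_mul _ _).symm
    have h2 : (-q/2 - Real.sqrt Δ) * (-q/2 + Real.sqrt Δ) = (-(p/3)) ^ 3 := by
      linear_combination (-1 : ℝ) * hsq - hΔ
    rw [h1, h2, cube_cbrt]
  have hp' : 4 * α ^ 2 * p = -(β ^ 2 + 4 * α * yb - 4 * α * γ - 2) := by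
    rw [hp]; field_simp
  have hq' : 4 * α ^ 3 * q = -(2 * α * xb + β) := by
    rw [hq]; field_simp
  have hx' : 2 * α * x₁ + β = 2 * α * (A + B) := by
    rw [hx₁]; field_simp; ring
  clear_value A B
  clear hA hB harg hq hp hΔ hx₁
  -- cleared cubic in x₁-form
  have hcubic : (2*α*x₁+β)^3 - (β^2+4*α*yb-4*α*γ-2)*(2*α*x₁+β) - 2*(2*α*xb+β) = 0 := by
    have hc : (A+B) ^ 3 + p * (A+B) + q = 0 := by
      linear_combination hA3 + hB3 + 3 * (A + B) * hAB
    rw [hx']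
    linear_combination 8 * α ^ 3 * hc - 2 * α * (A + B) * hp' - 2 * hq'
  set E : ℝ → ℝ := fun x => (α*(x+x₁)+β)^2 + (2*α*x₁+β)^2/2 - (β^2+4*α*yb-4*α*γ-2)/2
    with hE
  have key : ∀ x : ℝ,
      ((xb - x) ^ 2 + (yb - (α * x ^ 2 + β * x + γ)) ^ 2) -
        ((xb - x₁) ^ 2 + (yb - (α * x₁ ^ 2 + β * x₁ + γ)) ^ 2)
      = (x - x₁) ^ 2 * E x := by
    intro x
    have h2 : (2*α) * (((xb - x) ^ 2 + (yb - (α * x ^ 2 + β * x + γ)) ^ 2) -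
        ((xb - x₁) ^ 2 + (yb - (α * x₁ ^ 2 + β * x₁ + γ)) ^ 2))
        = (2*α) * ((x - x₁) ^ 2 * E x) := by
      rw [hE]
      linear_combination (x - x₁) * hcubic
    exact mul_left_cancel₀ (by simpa using hα) h2
  -- E in terms of A, B
  have hEAB : ∀ x : ℝ, E x = (α*(x+x₁)+β)^2 + 2*α^2*(A^2 - A*B + B^2) := by
    intro x
    rw [hE]
    linear_combination (-1/2) * hp' + (2*α*x₁+β+2*α*(A+B))/2 * hx' + 6*α^2 * hAB
  have hEnn : ∀ x : ℝ, 0 ≤ E x := by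
    intro x
    rw [hEAB]
    nlinarith [sq_nonneg (A - B), sq_nonneg A, sq_nonneg B, sq_nonneg (α*(x+x₁)+β)]
  have hEpos : ∀ x : ℝ, x ≠ x₁ → 0 < (x - x₁) ^ 2 * E x := by
    intro x hx
    have hd0 : x - x₁ ≠ 0 := sub_ne_zero.mpr hx
    by_cases hAB0 : A = 0 ∧ B = 0
    · -- degenerate case: forces p = 0 and Δ = 0, cubic root t₁ = 0
      obtain ⟨hA0, hB0⟩ := hAB0
      have h0 : 2*α*x₁ + β = 0 := by rw [hx', hA0, hB0]; ring
      have hEx : E x = α^2 * (x - x₁)^2 := by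
        rw [hEAB, hA0, hB0]
        linear_combination (α*(x+x₁)+β + α*(x-x₁)) * h0
      rw [hEx]
      positivity
    · have hABpos : 0 < A^2 - A*B + B^2 := by
        rcases not_and_or.mp hAB0 with h | h
        · have hA2 : 0 < A^2 := by positivity
          nlinarith [sq_nonneg (A - B), sq_nonneg B]
        · have hB2 : 0 < B^2 := by positivity
          nlinarith [sq_nonneg (A - B), sq_nonneg A]
      have hE0 : 0 < E x := by
        rw [hEAB]
        have h2 : 0 < 2*α^2*(A^2 - A*B + B^2) := by positivity
        nlinarith [sq_nonneg (α*(x+x₁)+β)]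
      positivity
  ext z
  simp only [Set.mem_setOf_eq, Set.mem_singleton_iff]
  constructor
  · rintro ⟨⟨x, rfl⟩, hmin⟩
    have hle := hmin x₁
    simp only at hle
    have h1 : (0:ℝ) ≤ (xb - x₁) ^ 2 + (yb - (α * x₁ ^ 2 + β * x₁ + γ)) ^ 2 := by positivity
    have hfx : (xb - x) ^ 2 + (yb - (α * x ^ 2 + β * x + γ)) ^ 2 ≤
        (xb - x₁) ^ 2 + (yb - (α * x₁ ^ 2 + β * x₁ + γ)) ^ 2 :=
      (Real.sqrt_le_sqrt_iff h1).mp hle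
    have hxx : x = x₁ := by
      by_contra hxne
      have h2 := hEpos x hxne
      have h3 := key x
      linarith
    rw [hxx]
  · rintro rfl
    refine ⟨⟨x₁, rfl⟩, fun w => Real.sqrt_le_sqrt ?_⟩
    have h3 := key w
    have h4 := mul_nonneg (sq_nonneg (w - x₁)) (hEnn w)
    simp only
    linarith
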